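/- If a node v in the Boolean iteration system has steady-state value zero under every instantiation of the external inputs, then removing v and all its incident edges does not change the steady-state value of any other node: for every other node u and every instantiation of external inputs, the steady-state value of u in the reduced system equals its steady-state value in the original system. -/

import Mathlib

/-!
The update map of the network is monotone, so the iteration from the all-zero state is
increasing in time; hence a node that is 0 at the steady-state time `Fintype.card V` is 0 at
every earlier time. Masking that node to 0 is then invisible to the original system, and with the
node masked one update of the reduced system coincides with one update of the original, so the
two trajectories agree off the node up to the steady-state time.
-/

section AndOrNetwork

variable {V : Type*} [Fintype V] (E : V → V → Prop) [DecidableRel E] (isAnd : V → Bool)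
  (inp : V → Bool)

def andOrStep (x : V → Bool) (v : V) : Bool :=
  inp v && if isAnd v = true then decide (∀ u, E u v → x u = true)
    else decide (∃ u, E u v ∧ x u = true)

theorem andOrStep_monotone : Monotone (andOrStep E isAnd inp) := by
  intro x y hxy v
  have hle : ∀ u, x u = true → y u = true := fun u hx => Bool.le_iff_imp.mp (hxy u) hx
  refine Bool.le_iff_imp.mpr fun hx => ?_
  simp only [andOrStep, Bool.and_eq_true] at hx ⊢
  refine ⟨hx.1, ?_⟩
  split_ifs at hx ⊢ <;> simp only [decide_eq_true_eq] at hx ⊢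
  · exact fun u he => hle u (hx.2 u he)
  · obtain ⟨u, he, hu⟩ := hx.2
    exact ⟨u, he, hle u hu⟩

theorem eq_iterate_andOrStep {s : ℕ → V → Bool} (h0 : ∀ v, s 0 v = false)
    (hs : ∀ k v, s (k + 1) v = andOrStep E isAnd inp (s k) v) (k : ℕ) :
    s k = (andOrStep E isAnd inp)^[k] ⊥ := by
  induction k with
  | zero => exact funext h0
  | succ k ih => rw [Function.iterate_succ_apply', ← ih]; exact funext (hs k)

theorem monotone_of_andOrStep {s : ℕ → V → Bool} (h0 : ∀ v, s 0 v = false)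
    (hs : ∀ k v, s (k + 1) v = andOrStep E isAnd inp (s k) v) : Monotone s := by
  rw [show s = _ from funext (eq_iterate_andOrStep E isAnd inp h0 hs)]
  exact (andOrStep_monotone E isAnd inp).monotone_iterate_of_le_map bot_le

/-- The right-hand side is the update of the reduced system, where `v0` is a constant 0 input. -/
theorem andOrStep_update_false [DecidableEq V] (x : V → Bool) (v0 v : V) :
    andOrStep E isAnd inp (Function.update x v0 false) v =
      (inp v && if isAnd v = true then decide (∀ u, E u v → (u ≠ v0 ∧ x u = true))
        else decide (∃ u, E u v ∧ u ≠ v0 ∧ x u = true)) := by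
  unfold andOrStep
  congr 2
  all_goals
    rw [decide_eq_decide]
    simp only [Function.update_apply]
  · refine forall_congr' fun u => imp_congr_right fun _ => ?_
    by_cases hu : u = v0 <;> simp [hu]
  · refine exists_congr fun u => and_congr_right fun _ => ?_
    by_cases hu : u = v0 <;> simp [hu]

end AndOrNetwork

/-- If a node `v0` of the Boolean iteration system has steady-state value zero
under every instantiation of the external inputs, then removing `v0` (treating
it as a constant 0 input to its former children) does not change the
steady-state value of any other node. -/
theorem type_one_node_elimination (V : Type*) [Fintype V] [DecidableEq V]
    (E : V → V → Prop) [DecidableRel E] (isAnd : V → Bool)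
    (val val' : (V → Bool) → ℕ → V → Bool)
    (h0 : ∀ inp v, val inp 0 v = false)
    (hs : ∀ inp k v, val inp (k + 1) v =
      (inp v && if isAnd v = true then decide (∀ u, E u v → val inp k u = true)
                else decide (∃ u, E u v ∧ val inp k u = true)))
    (v0 : V)
    (hdead : ∀ inp, val inp (Fintype.card V) v0 = false)
    (h0' : ∀ inp v, val' inp 0 v = false)
    (hs' : ∀ inp k v, val' inp (k + 1) v =
      if v = v0 then false else
      (inp v && if isAnd v = true then
                  decide (∀ u, E u v → (u ≠ v0 ∧ val' inp k u = true))
                else decide (∃ u, E u v ∧ u ≠ v0 ∧ val' inp k u = true))) :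
    ∀ inp : V → Bool, ∀ u : V, u ≠ v0 →
      val' inp (Fintype.card V) u = val inp (Fintype.card V) u := by
  intro inp
  have hmono : Monotone (val inp) := monotone_of_andOrStep E isAnd inp (h0 inp) (hs inp)
  have hdead_before {k : ℕ} (hk : k ≤ Fintype.card V) : val inp k v0 = false :=
    Bool.eq_false_iff.mpr fun h => by
      simpa [hdead inp] using Bool.le_iff_imp.mp (hmono hk v0) h
  have hmasked : ∀ k ≤ Fintype.card V, Function.update (val' inp k) v0 false = val inp k := by
    intro k
    induction k with
    | zero => intro _; funext u; simp [Function.update_apply, h0, h0']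
    | succ k ih =>
      intro hk
      funext u
      by_cases hu : u = v0
      · subst hu; rw [Function.update_self, hdead_before hk]
      · rw [Function.update_of_ne hu, hs', if_neg hu, hs,
          ← andOrStep_update_false, ih (by omega)]
        rfl
  intro u hu
  rw [← hmasked _ le_rfl, Function.update_of_ne hu]
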